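/- arXiv:1602.03018 — 4 statements merged into one kernel-verified Lean document; each statement's English description precedes it below -/
import Mathlib

section
/- Let α and ρ be real numbers. Let 𝒩 be the 6×6 real matrix whose rows are: row 1 = (−α, −1, 0, 0, 0, 0); row 2 = ((α+1)², α+2, 0, 0, 0, ρ); row 3 = (0, 0, −(1+α), 0, 0, 0); row 4 = (0, 0, 0, −α, −1, 0); row 5 = (0, 0, −2, α(α+1), α+1, 0); row 6 = (0, 0, 0, 0, 0, −(1+α)). Then the characteristic polynomial of 𝒩 equals X · (X−1)³ · (X+1+α)². -/
open Polynomial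

def permAux : Fin 6 ≃ Fin 6 :=
  ⟨![0, 1, 5, 2, 3, 4], ![0, 1, 3, 4, 5, 2], by decide, by decide⟩

def eAux : Fin 3 ⊕ Fin 3 ≃ Fin 6 := finSumFinEquiv.trans permAux

/-- Characteristic polynomial of the 6×6 matrix `𝒩 = (S⁰₀)⁻¹·N₀` of the
constraint-propagation system (equation (4.44) of the paper), whose roots are the
eigenvalue list Λ = (1,1,−1−α;0,1,−1−α) of equation (4.45). -/
theorem stmt_6 (α ρ : ℝ) :
    (!![-α, -1, 0, 0, 0, 0;
        (α + 1) ^ 2, α + 2, 0, 0, 0, ρ;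
        0, 0, -(1 + α), 0, 0, 0;
        0, 0, 0, -α, -1, 0;
        0, 0, -2, α * (α + 1), α + 1, 0;
        0, 0, 0, 0, 0, -(1 + α)] : Matrix (Fin 6) (Fin 6) ℝ).charpoly =
      X * (X - 1) ^ 3 * (X + C (1 + α)) ^ 2 := by
  have hM : (!![-α, -1, 0, 0, 0, 0;
        (α + 1) ^ 2, α + 2, 0, 0, 0, ρ;
        0, 0, -(1 + α), 0, 0, 0;
        0, 0, 0, -α, -1, 0;
        0, 0, -2, α * (α + 1), α + 1, 0;
        0, 0, 0, 0, 0, -(1 + α)] : Matrix (Fin 6) (Fin 6) ℝ) =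
      (Matrix.fromBlocks
        (!![-α, -1, 0; (α + 1) ^ 2, α + 2, ρ; 0, 0, -(1 + α)] : Matrix (Fin 3) (Fin 3) ℝ)
        0 0
        (!![-(1 + α), 0, 0; 0, -α, -1; -2, α * (α + 1), α + 1] :
          Matrix (Fin 3) (Fin 3) ℝ)).reindex eAux eAux := by
    ext i j
    fin_cases i <;> fin_cases j <;> rfl
  rw [hM, Matrix.charpoly_reindex, Matrix.charpoly_fromBlocks_zero₁₂]
  have hA : (!![-α, -1, 0; (α + 1) ^ 2, α + 2, ρ; 0, 0, -(1 + α)] :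
      Matrix (Fin 3) (Fin 3) ℝ).charpoly = (X + C (1 + α)) * (X - 1) ^ 2 := by
    rw [Matrix.charpoly, Matrix.det_fin_three]
    simp [Matrix.charmatrix_apply_eq, Matrix.charmatrix_apply_ne, Fin.ext_iff,
      map_add, _root_.map_mul, map_pow, map_neg, _root_.map_one, map_ofNat]
    ring
  have hD : (!![-(1 + α), 0, 0; 0, -α, -1; -2, α * (α + 1), α + 1] :
      Matrix (Fin 3) (Fin 3) ℝ).charpoly = X * (X - 1) * (X + C (1 + α)) := by
    rw [Matrix.charpoly, Matrix.det_fin_three]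
    simp [Matrix.charmatrix_apply_eq, Matrix.charmatrix_apply_ne, Fin.ext_iff,
      map_add, _root_.map_mul, map_pow, map_neg, _root_.map_one, map_ofNat]
    ring
  rw [hA, hD]
  ring
end

section
/- If u : (0,δ)×ℝⁿ → ℝ^d is twice continuously differentiable and satisfies the second-order system, then the functions U₋₁ := u, U₀ := Du − α·u, and U_a := t·∂_a u (a = 1,…,n) satisfy the first-order system (E₋₁), (E₀), (E_a). -/
/-
The time operator `D = t ∂_t` and the spatial derivatives `∂_a` satisfy the product rules
`D (t v) = t v + t D v` and `∂_a (t v) = t ∂_a v`, and they commute on `C²` functions because the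
second derivative is symmetric. With these rules (E₋₁) is the definition of `U₀`, (E₀) is the
second-order system rewritten in the new unknowns, and each summand of (E_a) is
`t (D ∂_b u − ∂_b D u) = 0`.
-/

/-- The Fuchsian time derivative `D u = t·∂_t u` for functions of `(t, x) ∈ ℝ × ℝⁿ`. -/
noncomputable def Dop {n d : ℕ} (u : ℝ × (Fin n → ℝ) → Fin d → ℝ)
    (p : ℝ × (Fin n → ℝ)) : Fin d → ℝ :=
  p.1 • deriv (fun s => u (s, p.2)) p.1

/-- The spatial partial derivative `∂_a u` for functions of `(t, x) ∈ ℝ × ℝⁿ`. -/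
noncomputable def pd {n d : ℕ} (a : Fin n) (u : ℝ × (Fin n → ℝ) → Fin d → ℝ)
    (p : ℝ × (Fin n → ℝ)) : Fin d → ℝ :=
  deriv (fun s => u (p.1, Function.update p.2 a s)) (p.2 a)

open Filter Topology

section

variable {n d : ℕ}

theorem HasFDerivAt.hasDerivAt_time_slice {v : ℝ × (Fin n → ℝ) → Fin d → ℝ}
    {L : ℝ × (Fin n → ℝ) →L[ℝ] Fin d → ℝ} {p : ℝ × (Fin n → ℝ)} (hv : HasFDerivAt v L p) :
    HasDerivAt (fun s => v (s, p.2)) (L (1, 0)) p.1 :=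
  hv.comp_hasDerivAt p.1 ((hasDerivAt_id p.1).prodMk (hasDerivAt_const _ _))

theorem HasFDerivAt.hasDerivAt_space_slice {v : ℝ × (Fin n → ℝ) → Fin d → ℝ}
    {L : ℝ × (Fin n → ℝ) →L[ℝ] Fin d → ℝ} {p : ℝ × (Fin n → ℝ)} (a : Fin n)
    (hv : HasFDerivAt v L p) :
    HasDerivAt (fun s => v (p.1, Function.update p.2 a s)) (L (0, Pi.single a 1)) (p.2 a) := by
  refine hv.comp_hasDerivAt_of_eq (p.2 a)
    ((hasDerivAt_const _ _).prodMk (hasDerivAt_update p.2 a _)) ?_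
  simp

section Calculus

variable {v w : ℝ × (Fin n → ℝ) → Fin d → ℝ} {p : ℝ × (Fin n → ℝ)}

theorem Dop_eq_fderiv (hv : DifferentiableAt ℝ v p) : Dop v p = p.1 • fderiv ℝ v p (1, 0) := by
  rw [Dop, hv.hasFDerivAt.hasDerivAt_time_slice.deriv]

theorem pd_eq_fderiv (a : Fin n) (hv : DifferentiableAt ℝ v p) :
    pd a v p = fderiv ℝ v p (0, Pi.single a 1) :=
  (hv.hasFDerivAt.hasDerivAt_space_slice a).deriv

theorem Filter.EventuallyEq.Dop_eq (h : v =ᶠ[𝓝 p] w) : Dop v p = Dop w p := by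
  have hslice : Tendsto (fun s : ℝ => (s, p.2)) (𝓝 p.1) (𝓝 p) :=
    (continuous_id.prodMk continuous_const).tendsto p.1
  rw [Dop, Dop]
  congr 1
  exact (h.comp_tendsto hslice).deriv_eq

theorem Filter.EventuallyEq.pd_eq (a : Fin n) (h : v =ᶠ[𝓝 p] w) : pd a v p = pd a w p := by
  have hslice : Tendsto (fun s : ℝ => (p.1, Function.update p.2 a s)) (𝓝 (p.2 a)) (𝓝 p) := by
    simpa using (continuousAt_const.prodMk (hasDerivAt_update p.2 a (p.2 a)).continuousAt).tendsto
  exact (h.comp_tendsto hslice).deriv_eq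

theorem Dop_sub_smul (hv : DifferentiableAt ℝ v p) (hw : DifferentiableAt ℝ w p) (c : ℝ) :
    Dop (fun q => v q - c • w q) p = Dop v p - c • Dop w p := by
  have hd := hv.hasFDerivAt.hasDerivAt_time_slice.fun_sub
    (hw.hasFDerivAt.hasDerivAt_time_slice.fun_const_smul c)
  rw [Dop, hd.deriv, Dop_eq_fderiv hv, Dop_eq_fderiv hw, smul_sub, smul_comm]

theorem pd_sub_smul (a : Fin n) (hv : DifferentiableAt ℝ v p) (hw : DifferentiableAt ℝ w p)
    (c : ℝ) : pd a (fun q => v q - c • w q) p = pd a v p - c • pd a w p := by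
  have hd := (hv.hasFDerivAt.hasDerivAt_space_slice a).fun_sub
    ((hw.hasFDerivAt.hasDerivAt_space_slice a).fun_const_smul c)
  rw [pd, hd.deriv, pd_eq_fderiv a hv, pd_eq_fderiv a hw]

theorem Dop_fst_smul (hv : DifferentiableAt ℝ v p) :
    Dop (fun q => q.1 • v q) p = p.1 • v p + p.1 • Dop v p := by
  have hd : HasDerivAt (fun s => s • v (s, p.2)) (p.1 • fderiv ℝ v p (1, 0) + (1 : ℝ) • v p) p.1 :=
    (hasDerivAt_id p.1).smul hv.hasFDerivAt.hasDerivAt_time_slice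
  rw [Dop, Dop_eq_fderiv hv, ← smul_add, add_comm, ← one_smul ℝ (v p), ← hd.deriv]

theorem pd_fst_smul (a : Fin n) : pd a (fun q => q.1 • v q) p = p.1 • pd a v p :=
  deriv_const_smul_field p.1 _

end Calculus

namespace ContDiffAt

variable {u : ℝ × (Fin n → ℝ) → Fin d → ℝ} {p : ℝ × (Fin n → ℝ)}

theorem Dop_eventuallyEq (hu : ContDiffAt ℝ 2 u p) :
    Dop u =ᶠ[𝓝 p] fun q => q.1 • fderiv ℝ u q (1, 0) := by
  filter_upwards [hu.eventually (by simp)] with q hq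
  exact Dop_eq_fderiv (hq.differentiableAt (by simp))

theorem pd_eventuallyEq (hu : ContDiffAt ℝ 2 u p) (a : Fin n) :
    pd a u =ᶠ[𝓝 p] fun q => fderiv ℝ u q (0, Pi.single a 1) := by
  filter_upwards [hu.eventually (by simp)] with q hq
  exact pd_eq_fderiv a (hq.differentiableAt (by simp))

theorem differentiableAt_fderiv (hu : ContDiffAt ℝ 2 u p) :
    DifferentiableAt ℝ (fderiv ℝ u) p :=
  (hu.fderiv_right (m := 1) (by norm_num)).differentiableAt one_ne_zero

theorem differentiableAt_Dop (hu : ContDiffAt ℝ 2 u p) : DifferentiableAt ℝ (Dop u) p :=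
  (differentiableAt_fst.smul
    (hu.differentiableAt_fderiv.clm_apply (differentiableAt_const _))).congr_of_eventuallyEq
    hu.Dop_eventuallyEq

theorem differentiableAt_pd (hu : ContDiffAt ℝ 2 u p) (a : Fin n) :
    DifferentiableAt ℝ (pd a u) p :=
  (hu.differentiableAt_fderiv.clm_apply (differentiableAt_const _)).congr_of_eventuallyEq
    (hu.pd_eventuallyEq a)

/-- Both sides equal `t · d²u(p)` evaluated on `(1, 0)` and `(0, eₐ)`, in opposite orders. -/
theorem Dop_pd_comm (hu : ContDiffAt ℝ 2 u p) (a : Fin n) : Dop (pd a u) p = pd a (Dop u) p := by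
  have happly : ∀ w, DifferentiableAt ℝ (fun q => fderiv ℝ u q w) p := fun w =>
    hu.differentiableAt_fderiv.clm_apply (differentiableAt_const w)
  rw [(hu.pd_eventuallyEq a).Dop_eq, hu.Dop_eventuallyEq.pd_eq a, pd_fst_smul,
    Dop_eq_fderiv (happly _), pd_eq_fderiv a (happly _),
    fderiv_clm_apply hu.differentiableAt_fderiv (differentiableAt_const _),
    fderiv_clm_apply hu.differentiableAt_fderiv (differentiableAt_const _)]
  simp only [fderiv_fun_const, Pi.zero_apply, ContinuousLinearMap.comp_zero, zero_add,
    ContinuousLinearMap.flip_apply, hu.isSymmSndFDerivAt (by simp) (1, 0)]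

end ContDiffAt

end

theorem stmt_9_general (n d : ℕ) (δ α : ℝ)
    (G0 : Fin n → ℝ × (Fin n → ℝ) → ℝ)
    (G : Fin n → Fin n → ℝ × (Fin n → ℝ) → ℝ)
    (h u : ℝ × (Fin n → ℝ) → Fin d → ℝ)
    (hu : ContDiffOn ℝ 2 u (Set.Ioo (0 : ℝ) δ ×ˢ (Set.univ : Set (Fin n → ℝ))))
    (hsecond : ∀ p ∈ Set.Ioo (0 : ℝ) δ ×ˢ (Set.univ : Set (Fin n → ℝ)),
      Dop (Dop u) p - ∑ a : Fin n, (2 * G0 a p) • (p.1 • pd a (Dop u) p)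
        - ∑ a : Fin n, ∑ b : Fin n, G a b p • ((p.1) ^ 2 • pd a (pd b u) p)
        - Dop u p = h p) :
    (let Um1 : ℝ × (Fin n → ℝ) → Fin d → ℝ := u
     let U0 : ℝ × (Fin n → ℝ) → Fin d → ℝ := fun q => Dop u q - α • u q
     let UA : Fin n → ℝ × (Fin n → ℝ) → Fin d → ℝ := fun a q => q.1 • pd a u q
     ∀ p ∈ Set.Ioo (0 : ℝ) δ ×ˢ (Set.univ : Set (Fin n → ℝ)),
       (Dop Um1 p - α • Um1 p - U0 p = 0) ∧
       (Dop U0 p - ∑ a : Fin n, (2 * G0 a p) • (p.1 • pd a U0 p)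
           - ∑ a : Fin n, ∑ b : Fin n, G a b p • (p.1 • pd a (UA b) p)
           - (α * (1 - α)) • Um1 p + (α - 1) • U0 p
         = h p + ∑ a : Fin n, (2 * α * G0 a p) • UA a p) ∧
       (∀ a : Fin n,
         ∑ b : Fin n, G a b p •
           (Dop (UA b) p - p.1 • pd b U0 p - (1 + α) • UA b p) = 0)) := by
  intro Um1 U0 UA p hp
  have hu2 : ContDiffAt ℝ 2 u p := hu.contDiffAt ((isOpen_Ioo.prod isOpen_univ).mem_nhds hp)
  have hdu : DifferentiableAt ℝ u p := hu2.differentiableAt (by norm_num)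
  have hpdU0 : ∀ a, pd a U0 p = pd a (Dop u) p - α • pd a u p := fun a =>
    pd_sub_smul a hu2.differentiableAt_Dop hdu α
  refine ⟨sub_self _, ?_, fun a => Finset.sum_eq_zero fun b _ => ?_⟩
  · have hsplit : ∑ a, (2 * G0 a p) • (p.1 • pd a U0 p)
        = ∑ a, (2 * G0 a p) • (p.1 • pd a (Dop u) p) - ∑ a, (2 * α * G0 a p) • UA a p := by
      rw [← Finset.sum_sub_distrib]
      refine Finset.sum_congr rfl fun a _ => ?_
      rw [hpdU0]
      module
    rw [hsplit, ← hsecond p hp, Dop_sub_smul hu2.differentiableAt_Dop hdu]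
    simp only [UA, pd_fst_smul, smul_smul, sq]
    module
  · rw [Dop_fst_smul (hu2.differentiableAt_pd b), hpdU0, hu2.Dop_pd_comm]
    module

/-- Appendix A, forward direction of the first-order reduction: if `u` is a C² solution of
the second-order system
`D²u − 2·Σ_a G⁰ᵃ·t∂_a(Du) − Σ_{a,b} Gᵃᵇ·t²∂_a∂_b u − Du = h`
on `(0,δ) × ℝⁿ`, then `U₋₁ := u`, `U₀ := Du − α·u`, `U_a := t·∂_a u` satisfy the associated
first-order system (E₋₁), (E₀), (E_a). -/
theorem stmt_9 (n d : ℕ) (hn : 0 < n) (hd : 0 < d) (δ α : ℝ) (hδ : 0 < δ)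
    (G0 : Fin n → ℝ × (Fin n → ℝ) → ℝ)
    (G : Fin n → Fin n → ℝ × (Fin n → ℝ) → ℝ)
    (hGsymm : ∀ a b : Fin n, G a b = G b a)
    (h u : ℝ × (Fin n → ℝ) → Fin d → ℝ)
    (hu : ContDiffOn ℝ 2 u (Set.Ioo (0 : ℝ) δ ×ˢ (Set.univ : Set (Fin n → ℝ))))
    (hsecond : ∀ p ∈ Set.Ioo (0 : ℝ) δ ×ˢ (Set.univ : Set (Fin n → ℝ)),
      Dop (Dop u) p - ∑ a : Fin n, (2 * G0 a p) • (p.1 • pd a (Dop u) p)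
        - ∑ a : Fin n, ∑ b : Fin n, G a b p • ((p.1) ^ 2 • pd a (pd b u) p)
        - Dop u p = h p) :
    (let Um1 : ℝ × (Fin n → ℝ) → Fin d → ℝ := u
     let U0 : ℝ × (Fin n → ℝ) → Fin d → ℝ := fun q => Dop u q - α • u q
     let UA : Fin n → ℝ × (Fin n → ℝ) → Fin d → ℝ := fun a q => q.1 • pd a u q
     ∀ p ∈ Set.Ioo (0 : ℝ) δ ×ˢ (Set.univ : Set (Fin n → ℝ)),
       (Dop Um1 p - α • Um1 p - U0 p = 0) ∧
       (Dop U0 p - ∑ a : Fin n, (2 * G0 a p) • (p.1 • pd a U0 p)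
           - ∑ a : Fin n, ∑ b : Fin n, G a b p • (p.1 • pd a (UA b) p)
           - (α * (1 - α)) • Um1 p + (α - 1) • U0 p
         = h p + ∑ a : Fin n, (2 * α * G0 a p) • UA a p) ∧
       (∀ a : Fin n,
         ∑ b : Fin n, G a b p •
           (Dop (UA b) p - p.1 • pd b U0 p - (1 + α) • UA b p) = 0)) :=
  stmt_9_general n d δ α G0 G h u hu hsecond
end

section
/- Suppose U₋₁ : (0,δ)×ℝⁿ → ℝ^d is twice continuously differentiable, U₀, U₁, …, U_n : (0,δ)×ℝⁿ → ℝ^d are continuously differentiable, the tuple (U₋₁, U₀, U₁, …, U_n) satisfies the first-order system (E₋₁), (E₀), (E_a), and the constraint identities U_a = t·∂_a U₋₁ hold on all of (0,δ)×ℝⁿ for each a = 1,…,n. Then u := U₋₁ is a classical solution of the second-order system. -/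
open Filter Topology

section Slices

variable {n d : ℕ} {f g : ℝ × (Fin n → ℝ) → Fin d → ℝ} {p : ℝ × (Fin n → ℝ)}

theorem DifferentiableAt.comp_time_slice (hf : DifferentiableAt ℝ f p) :
    DifferentiableAt ℝ (fun s => f (s, p.2)) p.1 :=
  hf.comp p.1 (differentiableAt_id.prodMk (differentiableAt_const _))

theorem differentiableAt_coord_curve (a : Fin n) :
    DifferentiableAt ℝ (fun s => (p.1, Function.update p.2 a s)) (p.2 a) :=
  (differentiableAt_const _).prodMk (hasDerivAt_update p.2 a (p.2 a)).differentiableAt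

theorem DifferentiableAt.comp_coord_slice (hf : DifferentiableAt ℝ f p) (a : Fin n) :
    DifferentiableAt ℝ (fun s => f (p.1, Function.update p.2 a s)) (p.2 a) := by
  have hf' : DifferentiableAt ℝ f (p.1, Function.update p.2 a (p.2 a)) := by simpa using hf
  exact hf'.comp (p.2 a) (differentiableAt_coord_curve a)

theorem Dop_congr_of_eventuallyEq (hfg : f =ᶠ[𝓝 p] g) : Dop f p = Dop g p := by
  have hslice : (fun s => f (s, p.2)) =ᶠ[𝓝 p.1] fun s => g (s, p.2) :=
    hfg.comp_tendsto ((Continuous.prodMk_left p.2).tendsto p.1)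
  simp only [Dop, hslice.deriv_eq]

theorem pd_congr_of_eventuallyEq (a : Fin n) (hfg : f =ᶠ[𝓝 p] g) : pd a f p = pd a g p := by
  have hcurve : Tendsto (fun s => (p.1, Function.update p.2 a s)) (𝓝 (p.2 a)) (𝓝 p) := by
    simpa using (differentiableAt_coord_curve (p := p) a).continuousAt.tendsto
  have hslice : (fun s => f (p.1, Function.update p.2 a s)) =ᶠ[𝓝 (p.2 a)]
      fun s => g (p.1, Function.update p.2 a s) :=
    hfg.comp_tendsto hcurve
  simp only [pd, hslice.deriv_eq]

theorem Dop_add (hf : DifferentiableAt ℝ f p) (hg : DifferentiableAt ℝ g p) :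
    Dop (f + g) p = Dop f p + Dop g p := by
  simp only [Dop, Pi.add_apply, deriv_fun_add hf.comp_time_slice hg.comp_time_slice, smul_add]

theorem pd_add (a : Fin n) (hf : DifferentiableAt ℝ f p) (hg : DifferentiableAt ℝ g p) :
    pd a (f + g) p = pd a f p + pd a g p := by
  simp only [pd, Pi.add_apply, deriv_fun_add (hf.comp_coord_slice a) (hg.comp_coord_slice a)]

theorem Dop_const_smul (c : ℝ) : Dop (c • f) p = c • Dop f p := by
  simp only [Dop, Pi.smul_apply, deriv_fun_const_smul_field, smul_comm p.1 c]

theorem pd_const_smul (a : Fin n) (c : ℝ) : pd a (c • f) p = c • pd a f p := by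
  simp only [pd, Pi.smul_apply, deriv_fun_const_smul_field]

theorem pd_time_smul (a : Fin n) (φ : ℝ → ℝ) :
    pd a (fun q => φ q.1 • f q) p = φ p.1 • pd a f p := by
  simp only [pd, deriv_fun_const_smul_field]

end Slices

theorem stmt_10_general (n d : ℕ) (δ α : ℝ)
    (G0 : Fin n → ℝ × (Fin n → ℝ) → ℝ)
    (G : Fin n → Fin n → ℝ × (Fin n → ℝ) → ℝ)
    (h : ℝ × (Fin n → ℝ) → Fin d → ℝ)
    (Um1 U0 : ℝ × (Fin n → ℝ) → Fin d → ℝ)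
    (UA : Fin n → ℝ × (Fin n → ℝ) → Fin d → ℝ)
    (hUm1 : ContDiffOn ℝ 2 Um1 (Set.Ioo (0 : ℝ) δ ×ˢ (Set.univ : Set (Fin n → ℝ))))
    (hU0 : ContDiffOn ℝ 1 U0 (Set.Ioo (0 : ℝ) δ ×ˢ (Set.univ : Set (Fin n → ℝ))))
    (hEm1 : ∀ p ∈ Set.Ioo (0 : ℝ) δ ×ˢ (Set.univ : Set (Fin n → ℝ)),
      Dop Um1 p - α • Um1 p - U0 p = 0)
    (hE0 : ∀ p ∈ Set.Ioo (0 : ℝ) δ ×ˢ (Set.univ : Set (Fin n → ℝ)),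
      Dop U0 p - ∑ a : Fin n, (2 * G0 a p) • (p.1 • pd a U0 p)
          - ∑ a : Fin n, ∑ b : Fin n, G a b p • (p.1 • pd a (UA b) p)
          - (α * (1 - α)) • Um1 p + (α - 1) • U0 p
        = h p + ∑ a : Fin n, (2 * α * G0 a p) • UA a p)
    (hconstraint : ∀ p ∈ Set.Ioo (0 : ℝ) δ ×ˢ (Set.univ : Set (Fin n → ℝ)), ∀ a : Fin n,
      UA a p = p.1 • pd a Um1 p) :
    ∀ p ∈ Set.Ioo (0 : ℝ) δ ×ˢ (Set.univ : Set (Fin n → ℝ)),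
      Dop (Dop Um1) p - ∑ a : Fin n, (2 * G0 a p) • (p.1 • pd a (Dop Um1) p)
        - ∑ a : Fin n, ∑ b : Fin n, G a b p • ((p.1) ^ 2 • pd a (pd b Um1) p)
        - Dop Um1 p = h p := by
  intro p hp
  have hS : Set.Ioo (0 : ℝ) δ ×ˢ (Set.univ : Set (Fin n → ℝ)) ∈ 𝓝 p :=
    (isOpen_Ioo.prod isOpen_univ).mem_nhds hp
  have hdUm1 : DifferentiableAt ℝ Um1 p := (hUm1.differentiableOn two_ne_zero).differentiableAt hS
  have hdU0 : DifferentiableAt ℝ U0 p := (hU0.differentiableOn one_ne_zero).differentiableAt hS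
  have hDu : Dop Um1 =ᶠ[𝓝 p] α • Um1 + U0 :=
    eventually_of_mem hS fun q hq => by simpa [sub_sub, sub_eq_zero] using hEm1 q hq
  have hUA (b : Fin n) : (fun q => q.1 • pd b Um1 q) =ᶠ[𝓝 p] UA b :=
    eventually_of_mem hS fun q hq => (hconstraint q hq b).symm
  have hDDu : Dop (Dop Um1) p = α • Dop Um1 p + Dop U0 p := by
    rw [Dop_congr_of_eventuallyEq hDu, Dop_add (hdUm1.const_smul α) hdU0, Dop_const_smul]
  have htDu (a : Fin n) : p.1 • pd a (Dop Um1) p = α • UA a p + p.1 • pd a U0 p := by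
    rw [pd_congr_of_eventuallyEq a hDu, pd_add a (hdUm1.const_smul α) hdU0, pd_const_smul,
      hconstraint p hp a]
    module
  have htDDu (a b : Fin n) : p.1 ^ 2 • pd a (pd b Um1) p = p.1 • pd a (UA b) p := by
    rw [← pd_congr_of_eventuallyEq a (hUA b), pd_time_smul a (fun t => t), pow_two, mul_smul]
  have hsum : ∑ a : Fin n, (2 * G0 a p) • (p.1 • pd a (Dop Um1) p)
      = ∑ a : Fin n, (2 * α * G0 a p) • UA a p
        + ∑ a : Fin n, (2 * G0 a p) • (p.1 • pd a U0 p) := by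
    rw [← Finset.sum_add_distrib]
    refine Finset.sum_congr rfl fun a _ => ?_
    rw [htDu a]
    module
  simp only [hDDu, hsum, htDDu, hDu.eq_of_nhds, Pi.add_apply, Pi.smul_apply]
  linear_combination (norm := module) hE0 p hp

/-- Appendix A, converse direction of the first-order reduction: if `(U₋₁, U₀, U₁, …, U_n)`
solves the first-order system (E₋₁), (E₀), (E_a) on `(0,δ) × ℝⁿ` and the constraint
identities `U_a = t·∂_a U₋₁` hold, then `u := U₋₁` is a classical solution of the
second-order system `D²u − 2·Σ_a G⁰ᵃ·t∂_a(Du) − Σ_{a,b} Gᵃᵇ·t²∂_a∂_b u − Du = h`. -/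
theorem stmt_10 (n d : ℕ) (hn : 0 < n) (hd : 0 < d) (δ α : ℝ) (hδ : 0 < δ)
    (G0 : Fin n → ℝ × (Fin n → ℝ) → ℝ)
    (G : Fin n → Fin n → ℝ × (Fin n → ℝ) → ℝ)
    (hGsymm : ∀ a b : Fin n, G a b = G b a)
    (h : ℝ × (Fin n → ℝ) → Fin d → ℝ)
    (Um1 U0 : ℝ × (Fin n → ℝ) → Fin d → ℝ)
    (UA : Fin n → ℝ × (Fin n → ℝ) → Fin d → ℝ)
    (hUm1 : ContDiffOn ℝ 2 Um1 (Set.Ioo (0 : ℝ) δ ×ˢ (Set.univ : Set (Fin n → ℝ))))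
    (hU0 : ContDiffOn ℝ 1 U0 (Set.Ioo (0 : ℝ) δ ×ˢ (Set.univ : Set (Fin n → ℝ))))
    (hUA : ∀ a : Fin n,
      ContDiffOn ℝ 1 (UA a) (Set.Ioo (0 : ℝ) δ ×ˢ (Set.univ : Set (Fin n → ℝ))))
    (hEm1 : ∀ p ∈ Set.Ioo (0 : ℝ) δ ×ˢ (Set.univ : Set (Fin n → ℝ)),
      Dop Um1 p - α • Um1 p - U0 p = 0)
    (hE0 : ∀ p ∈ Set.Ioo (0 : ℝ) δ ×ˢ (Set.univ : Set (Fin n → ℝ)),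
      Dop U0 p - ∑ a : Fin n, (2 * G0 a p) • (p.1 • pd a U0 p)
          - ∑ a : Fin n, ∑ b : Fin n, G a b p • (p.1 • pd a (UA b) p)
          - (α * (1 - α)) • Um1 p + (α - 1) • U0 p
        = h p + ∑ a : Fin n, (2 * α * G0 a p) • UA a p)
    (hEa : ∀ p ∈ Set.Ioo (0 : ℝ) δ ×ˢ (Set.univ : Set (Fin n → ℝ)), ∀ a : Fin n,
      ∑ b : Fin n, G a b p •
        (Dop (UA b) p - p.1 • pd b U0 p - (1 + α) • UA b p) = 0)
    (hconstraint : ∀ p ∈ Set.Ioo (0 : ℝ) δ ×ˢ (Set.univ : Set (Fin n → ℝ)), ∀ a : Fin n,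
      UA a p = p.1 • pd a Um1 p) :
    ∀ p ∈ Set.Ioo (0 : ℝ) δ ×ˢ (Set.univ : Set (Fin n → ℝ)),
      Dop (Dop Um1) p - ∑ a : Fin n, (2 * G0 a p) • (p.1 • pd a (Dop Um1) p)
        - ∑ a : Fin n, ∑ b : Fin n, G a b p • ((p.1) ^ 2 • pd a (pd b Um1) p)
        - Dop Um1 p = h p :=
  stmt_10_general n d δ α G0 G h Um1 U0 UA hUm1 hU0 hEm1 hE0 hconstraint
end

section
/- Fix k ∈ ℝ and for t > 0 let g(t) be the 4×4 diagonal matrix diag(−t^{(k²−1)/2}, t^{(k²−1)/2}, t^{1−k}, t^{1+k}). Then with the contracted Christoffel quantities defined from g (with ∂₀ = d/dt and ∂₁ = ∂₂ = ∂₃ = 0, since the components depend on t only), one has Γ₀(t) = −1/t and Γ₁(t) = Γ₂(t) = Γ₃(t) = 0 for every t > 0. -/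
/-- Partial derivative `∂_k g` of a matrix-valued function of `t` only:
`∂₀ = d/dt` and `∂₁ = ∂₂ = ∂₃ = 0`. -/
noncomputable def pdiffT (g : ℝ → Matrix (Fin 4) (Fin 4) ℝ) (k : Fin 4) (t : ℝ) :
    Matrix (Fin 4) (Fin 4) ℝ :=
  if k = 0 then Matrix.of (fun m i => deriv (fun s => g s m i) t) else 0

/-- The Christoffel quantities Γ_{kmi} = (1/2)(∂_k g_{mi} + ∂_i g_{mk} − ∂_m g_{ki}). -/
noncomputable def ΓlowT (g : ℝ → Matrix (Fin 4) (Fin 4) ℝ) (k m i : Fin 4) (t : ℝ) : ℝ :=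
  (1 / 2) * (pdiffT g k t m i + pdiffT g i t m k - pdiffT g m t k i)

/-- The contracted Christoffel quantities Γ_m = Σ_{k,i} g^{ki} Γ_{kmi}. -/
noncomputable def ΓcontrT (g : ℝ → Matrix (Fin 4) (Fin 4) ℝ) (m : Fin 4) (t : ℝ) : ℝ :=
  ∑ k : Fin 4, ∑ i : Fin 4, (g t)⁻¹ k i * ΓlowT g k m i t

/-!
For a diagonal metric `diag(d₀, …, d₃)` depending on `t` alone, the inverse is
`diag(d₀⁻¹, …, d₃⁻¹)`, so `Γ_m = Σ_k d_k⁻¹ Γ_{kmk}`. Since only `∂₀` is nonzero, the spatial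
`Γ_m` vanish and `Γ₀ = d₀'/d₀ - ½ Σ_k d_k'/d_k`. For `d_k = ±t^{p_k}` each logarithmic
derivative is `p_k / t`, and for the Kasner exponents
`p₀ - ½(p₀ + p₁ + p₂ + p₃) = (k²-1)/2 - ½((k²-1) + 2) = -1`.
-/

open Matrix

lemma Matrix.inv_diagonal_of_ne_zero {n K : Type*} [Fintype n] [DecidableEq n] [Field K]
    {v : n → K} (hv : ∀ i, v i ≠ 0) : (diagonal v)⁻¹ = diagonal fun i => (v i)⁻¹ := by
  refine inv_eq_left_inv ?_
  rw [diagonal_mul_diagonal]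
  exact diagonal_eq_one.mpr (funext fun i => inv_mul_cancel₀ (hv i))

lemma pdiffT_zero_apply (g : ℝ → Matrix (Fin 4) (Fin 4) ℝ) (t : ℝ) (m i : Fin 4) :
    pdiffT g 0 t m i = deriv (fun s => g s m i) t := by
  simp [pdiffT]

lemma pdiffT_of_ne_zero (g : ℝ → Matrix (Fin 4) (Fin 4) ℝ) {k : Fin 4} (hk : k ≠ 0) (t : ℝ) :
    pdiffT g k t = 0 :=
  if_neg hk

section DiagonalMetric

variable (d : ℝ → Fin 4 → ℝ) (t : ℝ)

lemma pdiffT_diagonal_of_ne (k : Fin 4) {m i : Fin 4} (hmi : m ≠ i) :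
    pdiffT (fun s => diagonal (d s)) k t m i = 0 := by
  by_cases hk : k = 0
  · simp [hk, pdiffT_zero_apply, diagonal_apply_ne _ hmi]
  · simp [pdiffT_of_ne_zero _ hk]

variable {d t}

lemma ΓcontrT_diagonal (hd : ∀ i, d t i ≠ 0) (m : Fin 4) :
    ΓcontrT (fun s => diagonal (d s)) m t =
      ∑ k, (d t k)⁻¹ * ΓlowT (fun s => diagonal (d s)) k m k t := by
  simp only [ΓcontrT, inv_diagonal_of_ne_zero hd, diagonal_apply]
  simp

lemma ΓcontrT_diagonal_of_ne_zero (hd : ∀ i, d t i ≠ 0) {m : Fin 4} (hm : m ≠ 0) :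
    ΓcontrT (fun s => diagonal (d s)) m t = 0 := by
  rw [ΓcontrT_diagonal hd]
  refine Finset.sum_eq_zero fun k _ => ?_
  have hmk : m ≠ k ∨ k ≠ 0 := by
    by_contra! h
    exact hm (h.1.trans h.2)
  rcases hmk with hmk | hk
  · simp [ΓlowT, pdiffT_of_ne_zero _ hm, pdiffT_diagonal_of_ne _ _ _ hmk]
  · simp [ΓlowT, pdiffT_of_ne_zero _ hm, pdiffT_of_ne_zero _ hk]

lemma ΓcontrT_diagonal_zero (hd : ∀ i, d t i ≠ 0) :
    ΓcontrT (fun s => diagonal (d s)) 0 t =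
      (d t 0)⁻¹ * deriv (fun s => d s 0) t -
        (1 / 2) * ∑ k, (d t k)⁻¹ * deriv (fun s => d s k) t := by
  rw [ΓcontrT_diagonal hd]
  simp only [Fin.sum_univ_four, ΓlowT, pdiffT_zero_apply, diagonal_apply_eq,
    pdiffT_of_ne_zero _ (show (1 : Fin 4) ≠ 0 by decide),
    pdiffT_of_ne_zero _ (show (2 : Fin 4) ≠ 0 by decide),
    pdiffT_of_ne_zero _ (show (3 : Fin 4) ≠ 0 by decide), Matrix.zero_apply]
  ring

end DiagonalMetric

lemma Real.rpow_inv_mul_deriv_rpow {t : ℝ} (ht : 0 < t) (p : ℝ) :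
    (t ^ p)⁻¹ * deriv (fun s => s ^ p) t = p / t := by
  rw [Real.deriv_rpow_const, Real.rpow_sub_one ht.ne']
  field_simp [(Real.rpow_pos_of_pos ht p).ne']

/-- For the Kasner metric g = diag(−t^{(k²−1)/2}, t^{(k²−1)/2}, t^{1−k}, t^{1+k}),
the contracted Christoffel quantities satisfy Γ₀ = −1/t and Γ₁ = Γ₂ = Γ₃ = 0 for
every t > 0, independently of the asymptotic velocity k (equation (3.11)). -/
theorem stmt_13 (k : ℝ) :
    (let g : ℝ → Matrix (Fin 4) (Fin 4) ℝ := fun t =>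
       Matrix.diagonal
         ![-(t ^ ((k ^ 2 - 1) / 2)), t ^ ((k ^ 2 - 1) / 2), t ^ (1 - k), t ^ (1 + k)]
     ∀ t : ℝ, 0 < t →
       ΓcontrT g 0 t = -(1 / t) ∧ ΓcontrT g 1 t = 0 ∧
       ΓcontrT g 2 t = 0 ∧ ΓcontrT g 3 t = 0) := by
  intro g t ht
  have hd : ∀ i,
      ![-(t ^ ((k ^ 2 - 1) / 2)), t ^ ((k ^ 2 - 1) / 2), t ^ (1 - k), t ^ (1 + k)] i ≠ 0 := by
    intro i
    fin_cases i <;> simp [(Real.rpow_pos_of_pos ht _).ne']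
  refine ⟨?_, ΓcontrT_diagonal_of_ne_zero hd (by decide),
    ΓcontrT_diagonal_of_ne_zero hd (by decide), ΓcontrT_diagonal_of_ne_zero hd (by decide)⟩
  rw [ΓcontrT_diagonal_zero hd, Fin.sum_univ_four]
  simp only [cons_val_zero, cons_val_one, cons_val, inv_neg, neg_mul, mul_neg, neg_neg,
    deriv.fun_neg', Real.rpow_inv_mul_deriv_rpow ht]
  field_simp
  ring
end
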